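/- Let F ⊆ E, K := Ch_D(F), and suppose C is a circuit of M_D with C ⊆ F and ta_D(C) ∩ K ≠ ∅. Then for every element e ∈ ta_D(C) ∩ K, there exists a circuit C' of M_D such that C' ⊆ K and e ∈ ta_D(C') ⊆ ta_D(C) ∩ K. -/

import Mathlib

variable {α : Type*}

/-- The rank (in `ℕ∞`) of a subset `X`: the largest size of an independent subset
of `X`. -/
noncomputable def erank (M : Matroid α) (X : Set α) : ℕ∞ :=
  ⨆ I ∈ {I : Set α | M.Indep I ∧ I ⊆ X}, I.encard

/-- A circuit of a matroid is an inclusion-wise minimal dependent set. -/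
def Matroid.IsCircuit' (M : Matroid α) (C : Set α) : Prop :=
  M.Dep C ∧ ∀ ⦃D : Set α⦄, D ⊂ C → M.Indep D

/-- The union of the levels `T 0, …, T (s-1)`. -/
def prevT (T : ℕ → Set α) (s : ℕ) : Set α := ⋃ j ∈ Finset.range s, T j

/-- The `≽`-maximal elements of `X`. -/
def heads (pref : α → α → Prop) (X : Set α) : Set α := {e ∈ X | ∀ f ∈ X, pref e f}

/-- The `≽`-minimal elements of `X`. -/
def tails (pref : α → α → Prop) (X : Set α) : Set α := {e ∈ X | ∀ f ∈ X, pref f e}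

/-- `e ≻ f`: strict preference. -/
def SPref (pref : α → α → Prop) (e f : α) : Prop := pref e f ∧ ¬ pref f e

/-- The level decomposition of `F` produced by Algorithm 1: each level `T s`
consists of the `≽`-maximal elements of what remains of `F` after removing the
earlier levels, and the levels exhaust `F`. -/
def IsLevels (pref : α → α → Prop) (F : Set α) (k : ℕ) (T : ℕ → Set α) : Prop :=
  prevT T k = F ∧ ∀ s < k, T s = heads pref (F \ prevT T s)

/-- Independence in the chain-decomposition matroid `M⟨F⟩` (the direct sum of the
minors `M_s = (M|(T 0 ∪ ⋯ ∪ T s)) / (T 0 ∪ ⋯ ∪ T (s-1))`): `I ⊆ F` and each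
block `I ∩ T s` is independent in `M_s`, i.e. satisfies the contraction rank
condition `rk((I ∩ T s) ∪ prevT s) = rk(prevT s) + |I ∩ T s|`. -/
def ChainIndep (M : Matroid α) (k : ℕ) (T : ℕ → Set α) (I : Set α) : Prop :=
  I ⊆ prevT T k ∧
  ∀ s < k, erank M ((I ∩ T s) ∪ prevT T s) = erank M (prevT T s) + (I ∩ T s).encard

/-- A base of the chain-decomposition matroid: a maximal independent set. -/
def ChainBase (M : Matroid α) (k : ℕ) (T : ℕ → Set α) (B : Set α) : Prop :=
  ChainIndep M k T B ∧ ∀ J : Set α, ChainIndep M k T J → B ⊆ J → J = B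

/-- A circuit of the chain-decomposition matroid: a minimal dependent set. -/
def ChainCircuit (M : Matroid α) (k : ℕ) (T : ℕ → Set α) (C : Set α) : Prop :=
  C ⊆ prevT T k ∧ ¬ ChainIndep M k T C ∧ ∀ ⦃D : Set α⦄, D ⊂ C → ChainIndep M k T D

/-- The greedy choice set `Ch(F)` (Algorithm 3): an element `e` of the level `T s`
belongs to `Ch(F)` iff `{e}` is independent in the contraction of `M` by the
earlier levels `T 0 ∪ ⋯ ∪ T (s-1)`. -/
def chooseSet (M : Matroid α) (k : ℕ) (T : ℕ → Set α) : Set α :=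
  {e | ∃ s < k, e ∈ T s ∧ erank M ({e} ∪ prevT T s) = erank M (prevT T s) + 1}

/-!
Let `K = Ch(F)` and let `e` be a `≽`-minimal element of the circuit `C` lying in `K`.
Every rejected element `x ∈ F \ K` is spanned by chosen elements strictly better than `x`,
so `C - e` is spanned by `Z := K ∩ ((C - e) ∪ {g | g ≻ e})`, and hence so is `e`.
A circuit `C' ⊆ Z + e` through `e` then lies in `K`, all its elements are `≽ e`, and
an element of `C' - e` that is `≼ e` cannot be `≻ e`, so it lies in `C` and is
`≽`-minimal there.
-/

open Set

lemma erank_eq_eRk (M : Matroid α) (X : Set α) : erank M X = M.eRk X :=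
  le_antisymm (iSup₂_le fun _ hI ↦ hI.1.encard_le_eRk_of_subset hI.2)
    (Matroid.eRk_le_iff.2 fun I hIX hI ↦ le_iSup₂_of_le I ⟨hI, hIX⟩ le_rfl)

lemma Matroid.isCircuit'_iff {M : Matroid α} {C : Set α} : M.IsCircuit' C ↔ M.IsCircuit C :=
  M.isCircuit_iff_forall_ssubset.symm

lemma SPref.trans_pref {pref : α → α → Prop} (htrans : Transitive pref) {g x e : α}
    (hgx : SPref pref g x) (hxe : pref x e) : SPref pref g e :=
  ⟨htrans hgx.1 hxe, fun heg ↦ hgx.2 (htrans hxe heg)⟩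

lemma mem_prevT {T : ℕ → Set α} {s : ℕ} {x : α} :
    x ∈ prevT T s ↔ ∃ j < s, x ∈ T j := by
  simp [prevT]

lemma prevT_mono (T : ℕ → Set α) {j s : ℕ} (h : j ≤ s) : prevT T j ⊆ prevT T s :=
  fun _ hx ↦ let ⟨i, hi, hx⟩ := mem_prevT.1 hx; mem_prevT.2 ⟨i, hi.trans_le h, hx⟩

lemma subset_prevT (T : ℕ → Set α) {j s : ℕ} (h : j < s) : T j ⊆ prevT T s :=
  fun _ hx ↦ mem_prevT.2 ⟨j, h, hx⟩

namespace IsLevels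

variable {pref : α → α → Prop} {F : Set α} {k : ℕ} {T : ℕ → Set α}

lemma level_subset (hT : IsLevels pref F k T) {s : ℕ} (hs : s < k) : T s ⊆ F :=
  hT.1 ▸ subset_prevT T hs

lemma level_subset_sdiff_prevT (hT : IsLevels pref F k T) {s : ℕ} (hs : s < k) :
    T s ⊆ F \ prevT T s := by
  rw [hT.2 s hs]
  exact fun _ hx ↦ hx.1

lemma sPref_of_mem_prevT (hT : IsLevels pref F k T) (htrans : Transitive pref)
    {s : ℕ} (hs : s < k) {f g : α} (hf : f ∈ T s) (hg : g ∈ prevT T s) :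
    SPref pref g f := by
  obtain ⟨j, hj, hgj⟩ := mem_prevT.1 hg
  have hjk : j < k := hj.trans hs
  have hg_head : g ∈ heads pref (F \ prevT T j) := hT.2 j hjk ▸ hgj
  have hf_rest : f ∈ F \ prevT T s := hT.level_subset_sdiff_prevT hs hf
  have hf_rest_j : f ∈ F \ prevT T j :=
    ⟨hf_rest.1, fun h ↦ hf_rest.2 (prevT_mono T hj.le h)⟩
  refine ⟨hg_head.2 f hf_rest_j, fun hfg ↦ hf_rest.2 (subset_prevT T hj ?_)⟩
  rw [hT.2 j hjk]
  exact ⟨hf_rest_j, fun y hy ↦ htrans hfg (hg_head.2 y hy)⟩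

variable {M : Matroid α}

lemma chooseSet_subset (hT : IsLevels pref F k T) : chooseSet M k T ⊆ F := by
  rintro x ⟨s, hs, hxT, -⟩
  exact hT.level_subset hs hxT

lemma mem_closure_prevT_of_notMem_chooseSet (hT : IsLevels pref F k T) (hF : F ⊆ M.E)
    {s : ℕ} (hs : s < k) {x : α} (hx : x ∈ T s) (hxK : x ∉ chooseSet M k T) :
    x ∈ M.closure (prevT T s) := by
  by_contra hcl
  refine hxK ⟨s, hs, hx, ?_⟩
  rw [singleton_union, erank_eq_eRk, erank_eq_eRk]
  exact Matroid.eRk_insert_eq_add_one ⟨hF (hT.level_subset hs hx), hcl⟩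

lemma prevT_subset_closure_chooseSet_inter (hT : IsLevels pref F k T) (hF : F ⊆ M.E)
    {s : ℕ} (hs : s ≤ k) : prevT T s ⊆ M.closure (chooseSet M k T ∩ prevT T s) := by
  induction s using Nat.strong_induction_on with
  | _ s ih =>
    intro x hx
    obtain ⟨j, hj, hxj⟩ := mem_prevT.1 hx
    have hjk : j < k := hj.trans_le hs
    by_cases hxK : x ∈ chooseSet M k T
    · exact M.mem_closure_of_mem' ⟨hxK, hx⟩ (hF (hT.level_subset hjk hxj))
    · have hx_cl : x ∈ M.closure (prevT T j) :=
        hT.mem_closure_prevT_of_notMem_chooseSet hF hjk hxj hxK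
      have hmono : M.closure (chooseSet M k T ∩ prevT T j) ⊆
          M.closure (chooseSet M k T ∩ prevT T s) :=
        M.closure_subset_closure (inter_subset_inter_right _ (prevT_mono T hj.le))
      exact hmono (M.closure_subset_closure_of_subset_closure (ih j hj hjk.le) hx_cl)

/-- The defining property of `Ch(F)` from the paper, in closure form. -/
lemma mem_closure_chooseSet_sPref (hT : IsLevels pref F k T) (hF : F ⊆ M.E)
    (htrans : Transitive pref) {x : α} (hx : x ∈ F \ chooseSet M k T) :
    x ∈ M.closure (chooseSet M k T ∩ {g | SPref pref g x}) := by
  obtain ⟨s, hs, hxs⟩ := mem_prevT.1 (hT.1 ▸ hx.1 : x ∈ prevT T k)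
  have hspan : prevT T s ⊆ M.closure (chooseSet M k T ∩ prevT T s) :=
    hT.prevT_subset_closure_chooseSet_inter hF hs.le
  have hbetter : chooseSet M k T ∩ prevT T s ⊆ chooseSet M k T ∩ {g | SPref pref g x} :=
    inter_subset_inter_right _ fun _ hg ↦ hT.sPref_of_mem_prevT htrans hs hxs hg
  exact M.closure_subset_closure hbetter <| M.closure_subset_closure_of_subset_closure hspan <|
    hT.mem_closure_prevT_of_notMem_chooseSet hF hs hxs hx.2

end IsLevels

lemma mem_tails_and_tails_subset_of_subset_insert {pref : α → α → Prop}
    (htrans : Transitive pref) {C C' : Set α} {e : α} (he : e ∈ tails pref C)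
    (hee : pref e e) (heC' : e ∈ C')
    (hC' : C' ⊆ insert e ((C \ {e}) ∪ {g | SPref pref g e})) :
    e ∈ tails pref C' ∧ tails pref C' ⊆ tails pref C := by
  have hge : ∀ g ∈ C', pref g e := by
    intro g hg
    rcases hC' hg with rfl | ⟨hgC, -⟩ | hge
    exacts [hee, he.2 g hgC, hge.1]
  refine ⟨⟨heC', hge⟩, fun g hg ↦ ?_⟩
  have heg : pref e g := hg.2 e heC'
  have hgC : g ∈ C := by
    rcases hC' hg.1 with rfl | ⟨hgC, -⟩ | hge
    exacts [he.1, hgC, absurd heg hge.2]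
  exact ⟨hgC, fun y hy ↦ htrans (he.2 y hy) heg⟩

theorem outside_circuit_chooseSet_general (M : Matroid α) (pref : α → α → Prop)
    (htrans : Transitive pref)
    (htotal : ∀ e ∈ M.E, ∀ f ∈ M.E, pref e f ∨ pref f e)
    (F : Set α) (hF : F ⊆ M.E) (k : ℕ) (T : ℕ → Set α)
    (hT : IsLevels pref F k T)
    (C : Set α) (hC : M.IsCircuit' C) (hCF : C ⊆ F)
    (e : α) (he : e ∈ tails pref C ∩ chooseSet M k T) :
    ∃ C' : Set α, M.IsCircuit' C' ∧ C' ⊆ chooseSet M k T ∧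
      e ∈ tails pref C' ∧ tails pref C' ⊆ tails pref C ∩ chooseSet M k T := by
  obtain ⟨heC, heK⟩ := he
  have hKE : chooseSet M k T ⊆ M.E := hT.chooseSet_subset.trans hF
  set Z := chooseSet M k T ∩ ((C \ {e}) ∪ {g | SPref pref g e})
  have hCZ : C \ {e} ⊆ M.closure Z := by
    intro x hx
    by_cases hxK : x ∈ chooseSet M k T
    · exact M.mem_closure_of_mem' ⟨hxK, .inl hx⟩ (hKE hxK)
    · refine M.closure_subset_closure (inter_subset_inter_right _ ?_)
        (hT.mem_closure_chooseSet_sPref hF htrans ⟨hCF hx.1, hxK⟩)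
      exact fun g hg ↦ .inr (hg.trans_pref htrans (heC.2 x hx.1))
  have heZ : e ∉ Z := by
    rintro ⟨-, ⟨-, hne⟩ | hbetter⟩
    exacts [hne rfl, hbetter.2 (heC.2 e heC.1)]
  rw [Matroid.isCircuit'_iff] at hC
  obtain ⟨C', hC'Z, hC', heC'⟩ := Matroid.exists_isCircuit_of_mem_closure
    (M.closure_subset_closure_of_subset_closure hCZ
      (hC.mem_closure_sdiff_singleton_of_mem heC.1)) heZ
  have hee : pref e e := (htotal e (hKE heK) e (hKE heK)).elim id id
  obtain ⟨heT', htails⟩ := mem_tails_and_tails_subset_of_subset_insert htrans heC hee heC'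
    (hC'Z.trans (insert_subset_insert inter_subset_right))
  have hC'K : C' ⊆ chooseSet M k T := hC'Z.trans (insert_subset heK inter_subset_left)
  exact ⟨C', Matroid.isCircuit'_iff.2 hC', hC'K, heT', fun g hg ↦ ⟨htails hg, hC'K hg.1⟩⟩

/-- Lemma 16: with `K := Ch(F)`, if `C` is a circuit of `M` with `C ⊆ F` and
`ta(C) ∩ K ≠ ∅`, then for every `e ∈ ta(C) ∩ K` there is a circuit `C'` of `M`
with `C' ⊆ K` and `e ∈ ta(C') ⊆ ta(C) ∩ K`. -/
theorem outside_circuit_chooseSet (M : Matroid α) (pref : α → α → Prop)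
    (htrans : Transitive pref)
    (htotal : ∀ e ∈ M.E, ∀ f ∈ M.E, pref e f ∨ pref f e)
    (hsingle : ∀ e ∈ M.E, M.Indep {e})
    (F : Set α) (hF : F ⊆ M.E) (k : ℕ) (T : ℕ → Set α)
    (hT : IsLevels pref F k T)
    (C : Set α) (hC : M.IsCircuit' C) (hCF : C ⊆ F)
    (hne : (tails pref C ∩ chooseSet M k T).Nonempty)
    (e : α) (he : e ∈ tails pref C ∩ chooseSet M k T) :
    ∃ C' : Set α, M.IsCircuit' C' ∧ C' ⊆ chooseSet M k T ∧
      e ∈ tails pref C' ∧ tails pref C' ⊆ tails pref C ∩ chooseSet M k T :=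
  outside_circuit_chooseSet_general M pref htrans htotal F hF k T hT C hC hCF e he
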